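/- Let D ⊆ ℝ^d be a uniform domain. Then the Lebesgue measure of ∂D is zero, and there exists c > 0 such that m(D ∩ B(x,r)) ≥ c r^d for all x in the closure of D and all 0 < r ≤ 1 (interior volume regularity). -/

import Mathlib

open MeasureTheory Metric Set

/-- A uniform domain in `ℝ^d` (Väisälä): an open connected set `D` such that for some
constant `C`, every pair of points `x, y ∈ D` is joined by a rectifiable curve `γ` in `D`
of length at most `C|x−y|`, along which `min{|x−z|, |z−y|} ≤ C · dist(z, ∂D)`. -/
def IsUniformDomain {d : ℕ} (D : Set (EuclideanSpace ℝ (Fin d))) : Prop :=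
  IsOpen D ∧ IsConnected D ∧ ∃ C : ℝ, 0 < C ∧
    ∀ x ∈ D, ∀ y ∈ D, ∃ γ : ℝ → EuclideanSpace ℝ (Fin d),
      ContinuousOn γ (Icc 0 1) ∧ γ 0 = x ∧ γ 1 = y ∧
      (∀ t ∈ Icc (0:ℝ) 1, γ t ∈ D) ∧
      eVariationOn γ (Icc 0 1) ≤ ENNReal.ofReal (C * dist x y) ∧
      ∀ t ∈ Icc (0:ℝ) 1,
        ENNReal.ofReal (min (dist x (γ t)) (dist (γ t) y))
          ≤ ENNReal.ofReal C * EMetric.infEdist (γ t) (frontier D)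

/-!
Following a uniform curve from a point of `D` close to `x ∈ closure D` towards a point of `D`
at distance at least `r / 2` from `x`, one meets a point `z` at distance `r / 8` from the
starting point, and the cigar condition gives `dist(z, ∂D) ≥ r / (8C)`. Hence `D ∩ B(x, r)`
contains a ball of radius `κ r` (if no such far point exists, `D ⊆ B(x, r)` and `D` contains a
fixed ball), so `D` has density at least `κ^d` in small balls around every boundary point.
By the Lebesgue density theorem the open set `D` has density `0` at almost every point outside
`D`, hence `∂D` is null.
-/

open Filter Topology
open scoped ENNReal

theorem Besicovitch.measure_eq_zero_of_frequently_le_measure_inter_closedBall {β : Type*}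
    [MetricSpace β] [MeasurableSpace β] [BorelSpace β] [SecondCountableTopology β]
    [HasBesicovitchCovering β] [ProperSpace β] (μ : Measure β) [IsFiniteMeasureOnCompacts μ]
    [μ.IsOpenPosMeasure] {s t : Set β} (ht : MeasurableSet t) (hst : Disjoint s t)
    {ε : ℝ≥0∞} (hε : 0 < ε)
    (h : ∀ x ∈ s, ∃ᶠ r in 𝓝[>] 0, ε * μ (closedBall x r) ≤ μ (t ∩ closedBall x r)) :
    μ s = 0 := by
  refine measure_mono_null (fun x hx => ?_)
    (ae_iff.mp (ae_tendsto_measure_inter_div_of_measurableSet μ ht))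
  intro hlim
  rw [indicator_of_notMem (hst.notMem_of_mem_left hx)] at hlim
  obtain ⟨r, hle, hlt, hr⟩ := ((h x hx).and_eventually
    ((hlim.eventually (gt_mem_nhds hε)).and self_mem_nhdsWithin)).exists
  refine hlt.not_ge ((ENNReal.le_div_iff_mul_le (Or.inl ?_) (Or.inl ?_)).2 hle)
  exacts [(measure_closedBall_pos μ x hr).ne', measure_closedBall_lt_top.ne]

theorem IsOpen.ball_subset_of_le_infEDist_frontier {α : Type*} [NormedAddCommGroup α]
    [NormedSpace ℝ α] {D : Set α} (hD : IsOpen D) {z : α} (hz : z ∈ D) {ρ : ℝ} (hρ : 0 < ρ)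
    (hρD : ENNReal.ofReal ρ ≤ Metric.infEDist z (frontier D)) : ball z ρ ⊆ D := by
  refine (convex_ball z ρ).isPreconnected.subset_of_closure_inter_subset hD
    ⟨z, mem_ball_self hρ, hz⟩ fun w ⟨hwD, hw⟩ => ?_
  by_contra hwD'
  have hzw : edist z w < ENNReal.ofReal ρ := edist_lt_ofReal.2 (mem_ball'.1 hw)
  exact ((hρD.trans (Metric.infEDist_le_edist_of_mem ⟨hwD, by rwa [hD.interior_eq]⟩)).trans_lt
    hzw).false

namespace IsUniformDomain

variable {d : ℕ} {D : Set (EuclideanSpace ℝ (Fin d))}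

theorem exists_ball_subset_inter_ball_of_le_dist (hD : IsUniformDomain D) :
    ∃ κ > 0, ∀ x ∈ closure D, ∀ r > 0, ∀ y ∈ D, r / 2 ≤ dist x y →
      ∃ z, ball z (κ * r) ⊆ D ∩ ball x r := by
  obtain ⟨hopen, -, C, hC, hcurve⟩ := hD
  refine ⟨min (1 / (8 * C)) (1 / 2), by positivity, fun x hx r hr y hy hxy => ?_⟩
  obtain ⟨x', hx', hxx'⟩ := Metric.mem_closure_iff.mp hx (r / 8) (by positivity)
  obtain ⟨γ, hγc, hγ0, hγ1, hγD, -, hγC⟩ := hcurve x' hx' y hy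
  obtain ⟨t, ht, hx'z⟩ : ∃ t ∈ Icc (0 : ℝ) 1, dist x' (γ t) = r / 8 := by
    refine intermediate_value_Icc zero_le_one
      ((continuous_const.dist continuous_id).comp_continuousOn hγc) ⟨?_, ?_⟩
    · simp only [Function.comp_apply, id, hγ0, dist_self]
      positivity
    · simp only [Function.comp_apply, id, hγ1]
      linarith [dist_triangle x x' y]
  have hzy : r / 8 ≤ dist (γ t) y := by
    linarith [dist_triangle x' (γ t) y, dist_triangle x x' y]
  have hfront : ENNReal.ofReal (r / 8) ≤ ENNReal.ofReal C * Metric.infEDist (γ t) (frontier D) :=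
    (ENNReal.ofReal_le_ofReal (le_min hx'z.ge hzy)).trans (hγC t ht)
  have hκr : min (1 / (8 * C)) (1 / 2) * r ≤ r / 8 / C := by
    calc min (1 / (8 * C)) (1 / 2) * r ≤ 1 / (8 * C) * r := by gcongr; exact min_le_left _ _
      _ = r / 8 / C := by field_simp
  refine ⟨γ t, subset_inter (hopen.ball_subset_of_le_infEDist_frontier (hγD t ht)
    (by positivity) ?_) fun w hw => ?_⟩
  · calc ENNReal.ofReal (min (1 / (8 * C)) (1 / 2) * r) ≤ ENNReal.ofReal (r / 8 / C) :=
          ENNReal.ofReal_le_ofReal hκr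
      _ = ENNReal.ofReal (r / 8) / ENNReal.ofReal C := ENNReal.ofReal_div_of_pos hC
      _ ≤ Metric.infEDist (γ t) (frontier D) := ENNReal.div_le_of_le_mul' hfront
  · have hκ2 : min (1 / (8 * C)) (1 / 2) * r ≤ r / 2 := by
      nlinarith [min_le_right (1 / (8 * C)) (1 / 2)]
    rw [mem_ball] at hw ⊢
    linarith [dist_triangle4 w (γ t) x' x, dist_comm x x', dist_comm x' (γ t)]

theorem exists_ball_subset_inter_ball (hD : IsUniformDomain D) :
    ∃ κ > 0, ∀ x ∈ closure D, ∀ r > 0, r ≤ 1 → ∃ z, ball z (κ * r) ⊆ D ∩ ball x r := by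
  obtain ⟨κ, hκ, hfar⟩ := hD.exists_ball_subset_inter_ball_of_le_dist
  obtain ⟨z₀, hz₀⟩ := hD.2.1.nonempty
  obtain ⟨ρ, hρ, hρD⟩ := Metric.isOpen_iff.mp hD.1 z₀ hz₀
  refine ⟨min κ ρ, lt_min hκ hρ, fun x hx r hr hr1 => ?_⟩
  by_cases hexists : ∃ y ∈ D, r / 2 ≤ dist x y
  · obtain ⟨y, hy, hxy⟩ := hexists
    obtain ⟨z, hz⟩ := hfar x hx r hr y hy hxy
    exact ⟨z, (ball_subset_ball (by gcongr; exact min_le_left _ _)).trans hz⟩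
  · simp only [not_exists, not_and, not_le] at hexists
    have hDx : D ⊆ ball x r := fun y hy => by
      rw [mem_ball']
      linarith [hexists y hy]
    have hz₀D : ball z₀ (min κ ρ * r) ⊆ D :=
      (ball_subset_ball (by nlinarith [min_le_right κ ρ])).trans hρD
    exact ⟨z₀, subset_inter hz₀D (hz₀D.trans hDx)⟩

theorem exists_mul_volume_closedBall_le_volume_inter_ball (hD : IsUniformDomain D) :
    ∃ κ > 0, ∀ x ∈ closure D, ∀ r > 0, r ≤ 1 →
      ENNReal.ofReal (κ ^ d) * volume (closedBall x r) ≤ volume (D ∩ ball x r) := by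
  obtain ⟨κ, hκ, hball⟩ := hD.exists_ball_subset_inter_ball
  refine ⟨κ, hκ, fun x hx r hr hr1 => ?_⟩
  obtain ⟨z, hz⟩ := hball x hx r hr hr1
  calc ENNReal.ofReal (κ ^ d) * volume (closedBall x r) = volume (ball z (κ * r)) := by
        rw [Measure.addHaar_closedBall _ _ hr.le,
          Measure.addHaar_ball_of_pos volume z (mul_pos hκ hr), finrank_euclideanSpace_fin,
          mul_pow, ENNReal.ofReal_mul (by positivity), mul_assoc]
    _ ≤ volume (D ∩ ball x r) := measure_mono hz

end IsUniformDomain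

/-- properties (2.1) of uniform domains. Let `D ⊆ ℝ^d` be a uniform
domain. Then the Lebesgue measure of `∂D` is zero, and there exists `c > 0` such that
`m(D ∩ B(x,r)) ≥ c r^d` for all `x` in the closure of `D` and all `0 < r ≤ 1`. -/
theorem stmt_15 {d : ℕ} (D : Set (EuclideanSpace ℝ (Fin d)))
    (hD : IsUniformDomain D) :
    volume (frontier D) = 0 ∧
    ∃ c : ℝ, 0 < c ∧ ∀ x ∈ closure D, ∀ r : ℝ, 0 < r → r ≤ 1 →
      ENNReal.ofReal (c * r ^ d) ≤ volume (D ∩ ball x r) := by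
  obtain ⟨κ, hκ, hreg⟩ := hD.exists_mul_volume_closedBall_le_volume_inter_ball
  set ι := volume (ball (0 : EuclideanSpace ℝ (Fin d)) 1)
  have hι : 0 < ι.toReal :=
    ENNReal.toReal_pos (measure_ball_pos _ _ one_pos).ne' measure_ball_lt_top.ne
  refine ⟨?_, κ ^ d * ι.toReal, by positivity, fun x hx r hr hr1 => ?_⟩
  · refine Besicovitch.measure_eq_zero_of_frequently_le_measure_inter_closedBall volume
      hD.1.measurableSet (disjoint_frontier_iff_isOpen.2 hD.1)
      (ENNReal.ofReal_pos.2 (pow_pos hκ d)) fun x hx => Eventually.frequently ?_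
    filter_upwards [Ioc_mem_nhdsGT one_pos] with r hr
    exact (hreg x (frontier_subset_closure hx) r hr.1 hr.2).trans
      (measure_mono (inter_subset_inter_right _ ball_subset_closedBall))
  · calc ENNReal.ofReal (κ ^ d * ι.toReal * r ^ d)
        = ENNReal.ofReal (κ ^ d) * volume (closedBall x r) := by
          rw [Measure.addHaar_closedBall _ _ hr.le, finrank_euclideanSpace_fin, mul_right_comm,
            ENNReal.ofReal_mul (by positivity), ENNReal.ofReal_mul (by positivity),
            ENNReal.ofReal_toReal measure_ball_lt_top.ne, mul_assoc]
      _ ≤ volume (D ∩ ball x r) := hreg x hx r hr hr1
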